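/- arXiv:2112.05229 — 2 statements merged into one kernel-verified Lean document; each statement's English description precedes it below -/
import Mathlib

section
/- Let n, k ≥ 1. If there exist a linearly independent family t : Fin n → V, an element g ∈ G, and a submodule W of V with finrank (ZMod p) W = k such that g (t i) ∈ W for all i, then for every family s : Fin n → V there exist g' ∈ G and a submodule W' of V with finrank (ZMod p) W' = k such that g' (s i) ∈ W' for all i. -/
/-!
Keep a set `I` of indices and `h ∈ G` with `h (s i) = t i` on `I`, starting from `I = ∅`, `h = 1`.
If `g * h` does not already map every `s i` into `W`, pick `j` with `g (h (s j)) ∉ W`. Over a finite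
field all spans of finite sets are finite, so some automorphism `ψ` of `V` fixes
`span (g '' (t '' I)) ≤ W` pointwise and sends `g (h (s j))` to a vector `v` with
`g⁻¹ v ∉ span (t '' I)`. Then `g⁻¹ * ψ * g * h` still agrees with `t` on `I` and is linearly
independent on `insert j I`, and a linear automorphism carries these values back onto `t`, so `I`
grows strictly. Linear automorphisms with finitely many prescribed independent values exist
because `V` has countably infinite dimension.
-/

open Submodule Set Equiv

section LinearAlgebra

variable {K V ι : Type*} [DivisionRing K] [AddCommGroup V] [Module K V]

theorem Module.Basis.sumExtend_apply_inl {v : ι → V} (hv : LinearIndependent K v) (i : ι) :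
    Module.Basis.sumExtend hv (Sum.inl i) = v i := by
  simp only [Module.Basis.sumExtend, Module.Basis.coe_reindex, Module.Basis.coe_extend,
    Function.comp_apply]
  rfl

theorem Module.Basis.infinite_sumExtendIndex [Finite ι] (hV : ¬ Module.Finite K V) {v : ι → V}
    (hv : LinearIndependent K v) : Infinite (Module.Basis.sumExtendIndex hv) := by
  by_contra hfin
  have := not_infinite_iff_finite.mp hfin
  exact hV (Module.Finite.of_basis (Module.Basis.sumExtend hv))

theorem exists_linearEquiv_apply_eq [Countable V] [Finite ι] (hV : ¬ Module.Finite K V)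
    {x y : ι → V} (hx : LinearIndependent K x) (hy : LinearIndependent K y) :
    ∃ φ : V ≃ₗ[K] V, ∀ i, φ (x i) = y i := by
  have := Module.Basis.infinite_sumExtendIndex hV hx
  have := Module.Basis.infinite_sumExtendIndex hV hy
  obtain ⟨_⟩ := nonempty_denumerable (Module.Basis.sumExtendIndex hx)
  obtain ⟨_⟩ := nonempty_denumerable (Module.Basis.sumExtendIndex hy)
  let e := (Denumerable.eqv (Module.Basis.sumExtendIndex hx)).trans
    (Denumerable.eqv (Module.Basis.sumExtendIndex hy)).symm
  refine ⟨(Module.Basis.sumExtend hx).equiv (Module.Basis.sumExtend hy)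
    ((Equiv.refl ι).sumCongr e), fun i => ?_⟩
  rw [← Module.Basis.sumExtend_apply_inl hx, Module.Basis.equiv_apply, Equiv.sumCongr_apply,
    Sum.map_inl, Equiv.refl_apply, Module.Basis.sumExtend_apply_inl]

theorem exists_linearEquiv_apply_eq_and_eqOn [Countable V] (hV : ¬ Module.Finite K V)
    (S : Submodule K V) [FiniteDimensional K S] {q v : V} (hq : q ∉ S) (hv : v ∉ S) :
    ∃ ψ : V ≃ₗ[K] V, ψ q = v ∧ ∀ x ∈ S, ψ x = x := by
  let b := Module.finBasis K S
  have hb : LinearIndependent K (S.subtype ∘ b) :=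
    b.linearIndependent.map' S.subtype S.ker_subtype
  have hspan : span K (range (S.subtype ∘ b)) = S := by
    rw [range_comp, span_image, b.span_eq, Submodule.map_subtype_top]
  obtain ⟨ψ, hψ⟩ := exists_linearEquiv_apply_eq hV
    (linearIndependent_finCons.mpr ⟨hb, hspan.symm ▸ hq⟩)
    (linearIndependent_finCons.mpr ⟨hb, hspan.symm ▸ hv⟩)
  refine ⟨ψ, by simpa using hψ 0, fun x hx => ?_⟩
  have hfix : ψ.toLinearMap ∘ₗ S.subtype = S.subtype :=
    b.ext fun i => by simpa using hψ i.succ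
  exact LinearMap.congr_fun hfix ⟨x, hx⟩

theorem Submodule.finite_span_of_finite [Finite K] {s : Set V} (hs : s.Finite) :
    (span K s : Set V).Finite := by
  have := FiniteDimensional.span_of_finite K hs
  have := Module.finite_of_finite K (M := span K s)
  exact Set.toFinite _

theorem Module.not_finite_of_infinite [Finite K] [Infinite V] : ¬ Module.Finite K V := by
  intro
  have := Module.finite_of_finite K (M := V)
  exact not_finite V

end LinearAlgebra

section PermutationGroup

variable {K V ι : Type*} [DivisionRing K] [Finite K] [AddCommGroup V] [Module K V] [Countable V]
  [Infinite V] [Finite ι] {G : Subgroup (Perm V)}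
  (hAut : ∀ φ : V ≃ₗ[K] V, (φ.toEquiv : Perm V) ∈ G)
  {t : ι → V} (ht : LinearIndependent K t) {s : ι → V}
include hAut ht

theorem exists_mem_eqOn_of_linearIndepOn {h : Perm V} (hh : h ∈ G) {I : Set ι}
    (hI : LinearIndepOn K (h ∘ s) I) : ∃ h' ∈ G, EqOn (h' ∘ s) t I := by
  obtain ⟨φ, hφ⟩ := exists_linearEquiv_apply_eq Module.not_finite_of_infinite hI
    (ht.comp ((↑) : I → ι) Subtype.val_injective)
  exact ⟨φ.toEquiv * h, mul_mem (hAut φ) hh, fun i hi => hφ ⟨i, hi⟩⟩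

variable {g : Perm V} (hg : g ∈ G) {W : Submodule K V} (hmap : ∀ i, g (t i) ∈ W)
include hg hmap

theorem exists_mem_linearIndepOn_insert {h : Perm V} (hh : h ∈ G) {I : Set ι}
    (hI : EqOn (h ∘ s) t I) {j : ι} (hjI : j ∉ I) (hj : g (h (s j)) ∉ W) :
    ∃ h' ∈ G, LinearIndepOn K (h' ∘ s) (insert j I) := by
  set S := span K (g '' (t '' I))
  have hIfin : (t '' I).Finite := I.toFinite.image t
  have : FiniteDimensional K S := FiniteDimensional.span_of_finite K (hIfin.image g)
  have hSW : S ≤ W := span_le.mpr (by rintro _ ⟨_, ⟨i, -, rfl⟩, rfl⟩; exact hmap i)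
  obtain ⟨v, hv⟩ := ((finite_span_of_finite (K := K) (hIfin.image g)).union
    ((finite_span_of_finite (K := K) hIfin).image g)).exists_notMem
  rw [mem_union, not_or] at hv
  obtain ⟨ψ, hψq, hψS⟩ := exists_linearEquiv_apply_eq_and_eqOn Module.not_finite_of_infinite S
    (fun hq => hj (hSW hq)) hv.1
  refine ⟨g⁻¹ * ψ.toEquiv * g * h, mul_mem (mul_mem (mul_mem (inv_mem hg) (hAut ψ)) hg) hh, ?_⟩
  have heq : EqOn ((g⁻¹ * ψ.toEquiv * g * h : Perm V) ∘ s) t I := fun i hi => by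
    have hsi : h (s i) = t i := hI hi
    simp [hsi, hψS _ (subset_span ⟨t i, mem_image_of_mem t hi, rfl⟩)]
  rw [linearIndepOn_insert hjI, heq.image_eq]
  refine ⟨(ht.linearIndepOn I).congr heq.symm, fun hmem => hv.2 ⟨_, hmem, ?_⟩⟩
  simp [hψq]

theorem exists_mem_forall_mem_or_exists_eqOn_insert {h : Perm V} (hh : h ∈ G) {I : Set ι}
    (hI : EqOn (h ∘ s) t I) :
    (∃ h' ∈ G, ∀ i, h' (s i) ∈ W) ∨ ∃ h' ∈ G, ∃ j ∉ I, EqOn (h' ∘ s) t (insert j I) := by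
  by_cases hall : ∀ i, g (h (s i)) ∈ W
  · exact .inl ⟨g * h, mul_mem hg hh, hall⟩
  obtain ⟨j, hj⟩ := not_forall.mp hall
  have hjI : j ∉ I := fun hjI => hj (by rw [show h (s j) = t j from hI hjI]; exact hmap j)
  obtain ⟨h'', hh'', hind⟩ := exists_mem_linearIndepOn_insert hAut ht hg hmap hh hI hjI hj
  obtain ⟨h', hh', heq⟩ := exists_mem_eqOn_of_linearIndepOn hAut ht hh'' hind
  exact .inr ⟨h', hh', j, hjI, heq⟩

theorem exists_mem_forall_apply_mem : ∃ h ∈ G, ∀ i, h (s i) ∈ W := by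
  suffices ∀ I : Set ι, (∃ h ∈ G, EqOn (h ∘ s) t I) → ∃ h ∈ G, ∀ i, h (s i) ∈ W from
    this ∅ ⟨1, one_mem G, eqOn_empty _ _⟩
  intro I
  induction I using WellFoundedGT.induction with
  | _ I ih =>
    rintro ⟨h, hh, hI⟩
    obtain done | ⟨h', hh', j, hjI, hI'⟩ :=
      exists_mem_forall_mem_or_exists_eqOn_insert hAut ht hg hmap hh hI
    · exact done
    · exact ih _ (ssubset_insert hjI) ⟨h', hh', hI'⟩

end PermutationGroup

theorem stmt_11_general (p : ℕ) [Fact p.Prime]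
    (V : Type*) [AddCommGroup V] [Module (ZMod p) V] [Countable V] [Infinite V]
    (G : Subgroup (Equiv.Perm V))
    (hAut : ∀ φ : V ≃ₗ[ZMod p] V, (φ.toEquiv : Equiv.Perm V) ∈ G)
    (n k : ℕ)
    (t : Fin n → V) (ht : LinearIndependent (ZMod p) t)
    (g : Equiv.Perm V) (hg : g ∈ G)
    (W : Submodule (ZMod p) V) (hW : Module.finrank (ZMod p) W = k)
    (hmap : ∀ i, g (t i) ∈ W)
    (s : Fin n → V) :
    ∃ g' ∈ G, ∃ W' : Submodule (ZMod p) V,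
      Module.finrank (ZMod p) W' = k ∧ ∀ i, g' (s i) ∈ W' := by
  obtain ⟨h, hh, hs⟩ := exists_mem_forall_apply_mem hAut ht hg hmap (s := s)
  exact ⟨h, hh, W, hW, hs⟩

/-- If some linearly independent `n`-tuple can be mapped into a `k`-dimensional
subspace of `V` by an element of `G`, then every `n`-tuple can. -/
theorem stmt_11 (p : ℕ) [Fact p.Prime] (hp : p ≠ 2)
    (V : Type*) [AddCommGroup V] [Module (ZMod p) V] [Countable V] [Infinite V]
    (G : Subgroup (Equiv.Perm V))
    (hclosed : ∀ f : Equiv.Perm V, (∀ F : Finset V, ∃ g ∈ G, ∀ x ∈ F, g x = f x) → f ∈ G)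
    (hAut : ∀ φ : V ≃ₗ[ZMod p] V, (φ.toEquiv : Equiv.Perm V) ∈ G)
    (hzero : ∀ g ∈ G, g 0 = (0 : V))
    (n k : ℕ) (hn : 1 ≤ n) (hk : 1 ≤ k)
    (t : Fin n → V) (ht : LinearIndependent (ZMod p) t)
    (g : Equiv.Perm V) (hg : g ∈ G)
    (W : Submodule (ZMod p) V) (hW : Module.finrank (ZMod p) W = k)
    (hmap : ∀ i, g (t i) ∈ W)
    (s : Fin n → V) :
    ∃ g' ∈ G, ∃ W' : Submodule (ZMod p) V,
      Module.finrank (ZMod p) W' = k ∧ ∀ i, g' (s i) ∈ W' :=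
  stmt_11_general p V G hAut n k t ht g hg W hW hmap s
end

section
/- Assume: (i) for every g ∈ G and all nonzero v, w ∈ V with Submodule.span (ZMod p) {v} = Submodule.span (ZMod p) {w}, one has Submodule.span (ZMod p) {g v} = Submodule.span (ZMod p) {g w}; and (ii) for every g ∈ G and all nonzero u, v, w ∈ V: u ∈ Submodule.span (ZMod p) {v, w} if and only if g u ∈ Submodule.span (ZMod p) {g v, g w}. Then G = G* Aut(V), where G* consists of the elements of G fixing every one-dimensional subspace setwise: for every g ∈ G there exist h ∈ G and a linear automorphism φ : V ≃ₗ[ZMod p] V such that Submodule.span (ZMod p) {h v} = Submodule.span (ZMod p) {v} for all v ∈ V and g x = h (φ x) for all x ∈ V. -/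
/-!
The hypotheses say that `g` fixes `0`, permutes the lines of `V` and maps every plane spanned
by two vectors into the plane spanned by their images. Rescale the images of a basis `b` to
`f` so that `g (b i₀ + b j)` lies on the line of `f i₀ + f j`, and let `ψ` be the injective
linear map with `ψ (b i) = f i`. Agreement of `g` with `ψ` up to scalars propagates: if it
holds on two pairs of vectors spanning planes that meet in the line of `x`, it holds at `x`,
because `g` maps each plane into its `ψ`-image. Inside three coordinate directions this gives
agreement at `b i₀ + (n + 1) • b j` from agreement at `b i₀ + n • b j`; since every scalar of a
prime field is a natural number, `g` agrees with `ψ` on `b i₀ + c • b j`, and an induction on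
the support reaches every vector. Then `ψ` is onto, and `g ∘ ψ⁻¹` fixes every line.
-/

open Submodule Function

section

theorem LinearIndependent.eq_zero_of_smul_add_smul_add_smul {R M : Type*} [Ring R]
    [AddCommGroup M] [Module R M] {u v w : M} (h : LinearIndependent R ![u, v, w])
    {a b c : R} (habc : a • u + b • v + c • w = 0) : a = 0 ∧ b = 0 ∧ c = 0 := by
  have := Fintype.linearIndependent_iff.1 h ![a, b, c]
    (by simpa [Fin.sum_univ_three] using habc)
  exact ⟨this 0, this 1, this 2⟩

variable {K V ι : Type*} [Field K] [AddCommGroup V] [Module K V]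

theorem LinearIndependent.linearIndependent_triple_of_mem_span {b : ι → V}
    (hb : LinearIndependent K b) {i k : ι} {T : Set ι} (hik : i ≠ k) (hi : i ∉ T) (hk : k ∉ T)
    {y : V} (hy : y ∈ span K (b '' T)) (hy0 : y ≠ 0) : LinearIndependent K ![b i, y, b k] := by
  rw [Fintype.linearIndependent_iff]
  intro c hc
  simp only [Fin.sum_univ_three, Matrix.cons_val_zero, Matrix.cons_val_one,
    Matrix.cons_val_two, Matrix.head_cons, Matrix.tail_cons] at hc
  have hdisj := hb.disjoint_span_image (s := T) (t := {i, k}) (by simp [hi, hk])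
  have hcy : c 1 • y = 0 := by
    refine disjoint_def.1 hdisj _ (smul_mem _ _ hy) ?_
    rw [Set.image_pair, show c 1 • y = -c 0 • b i + -c 2 • b k by
      linear_combination (norm := module) hc]
    exact mem_span_pair.2 ⟨_, _, rfl⟩
  have hc1 : c 1 = 0 := (smul_eq_zero.1 hcy).resolve_right hy0
  rw [hcy, add_zero] at hc
  obtain ⟨hc0, hc2⟩ := (LinearIndepOn.pair_iff b hik).1 (hb.linearIndepOn _) _ _ hc
  intro j
  fin_cases j <;> assumption

theorem LinearIndependent.linearIndependent_triple {v : ι → V} (hv : LinearIndependent K v)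
    {i j k : ι} (hij : i ≠ j) (hik : i ≠ k) (hjk : j ≠ k) :
    LinearIndependent K ![v i, v j, v k] :=
  hv.linearIndependent_triple_of_mem_span (T := {j}) hik (by simpa using hij)
    (by simpa using hjk.symm) (subset_span ⟨j, rfl, rfl⟩) (hv.ne_zero j)

theorem Submodule.span_pair_inf_span_pair_eq_span_singleton {x p q p' q' : V}
    (hx : x ∈ span K {p, q}) (hx' : x ∈ span K {p', q'})
    (h : ∀ α β γ δ : K, α • p + β • q = γ • p' + δ • q' → ∃ t : K, α • p + β • q = t • x) :
    span K {p, q} ⊓ span K {p', q'} = K ∙ x := by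
  refine le_antisymm (fun z hz => ?_) ((span_singleton_le_iff_mem _ _).2 (mem_inf.2 ⟨hx, hx'⟩))
  obtain ⟨⟨α, β, rfl⟩, ⟨γ, δ, h'⟩⟩ := And.imp mem_span_pair.1 mem_span_pair.1 (mem_inf.1 hz)
  obtain ⟨t, ht⟩ := h α β γ δ h'.symm
  exact mem_span_singleton.2 ⟨t, ht.symm⟩

namespace LinearIndependent

variable {u v w : V} (huvw : LinearIndependent K ![u, v, w])
include huvw

theorem inf_span_pair_eq_span_add_smul_add_smul (a c : K) :
    span K {u + a • v, w} ⊓ span K {u + c • w, v} = K ∙ (u + a • v + c • w) := by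
  refine span_pair_inf_span_pair_eq_span_singleton (mem_span_pair.2 ⟨1, c, by module⟩)
    (mem_span_pair.2 ⟨1, a, by module⟩) fun α β γ δ h => ⟨α, ?_⟩
  obtain ⟨hu, -, hw⟩ := huvw.eq_zero_of_smul_add_smul_add_smul
    (a := α - γ) (b := α * a - δ) (c := β - γ * c) (by linear_combination (norm := module) h)
  linear_combination (norm := module) (hw - c * hu) • w

theorem inf_span_pair_eq_span_add_smul (c : K) :
    span K {v, w} ⊓ span K {u, u + v + c • w} = K ∙ (v + c • w) := by
  refine span_pair_inf_span_pair_eq_span_singleton (mem_span_pair.2 ⟨1, c, by module⟩)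
    (mem_span_pair.2 ⟨-1, 1, by module⟩) fun α β γ δ h => ⟨α, ?_⟩
  obtain ⟨-, hv, hw⟩ := huvw.eq_zero_of_smul_add_smul_add_smul
    (a := -γ - δ) (b := α - δ) (c := β - δ * c) (by linear_combination (norm := module) h)
  linear_combination (norm := module) (hw - c * hv) • w

theorem inf_span_pair_eq_span_sub :
    span K {v, w} ⊓ span K {u + v, u + w} = K ∙ (v - w) := by
  refine span_pair_inf_span_pair_eq_span_singleton (mem_span_pair.2 ⟨1, -1, by module⟩)
    (mem_span_pair.2 ⟨1, -1, by module⟩) fun α β γ δ h => ⟨α, ?_⟩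
  obtain ⟨hu, hv, hw⟩ := huvw.eq_zero_of_smul_add_smul_add_smul
    (a := -γ - δ) (b := α - γ) (c := β - δ) (by linear_combination (norm := module) h)
  linear_combination (norm := module) (hw - hu + hv) • w

theorem inf_span_pair_eq_span_add_add_one_smul (a : K) :
    span K {u, v} ⊓ span K {u + a • v + w, v - w} = K ∙ (u + (a + 1) • v) := by
  refine span_pair_inf_span_pair_eq_span_singleton (mem_span_pair.2 ⟨1, a + 1, by module⟩)
    (mem_span_pair.2 ⟨1, 1, by module⟩) fun α β γ δ h => ⟨α, ?_⟩
  obtain ⟨hu, hv, hw⟩ := huvw.eq_zero_of_smul_add_smul_add_smul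
    (a := α - γ) (b := β - γ * a - δ) (c := -γ + δ) (by linear_combination (norm := module) h)
  linear_combination (norm := module) (hv - (a + 1) * hu + hw) • v

end LinearIndependent

variable (K) in
structure IsCollineation (g : Equiv.Perm V) : Prop where
  map_zero : g 0 = 0
  mem_span_pair_iff {u v w : V} (hu : u ≠ 0) (hv : v ≠ 0) (hw : w ≠ 0) :
    u ∈ span K {v, w} ↔ g u ∈ span K {g v, g w}

namespace IsCollineation

variable {g : Equiv.Perm V} (hg : IsCollineation K g)
include hg

theorem map_ne_zero {x : V} (hx : x ≠ 0) : g x ≠ 0 :=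
  fun h => hx (g.injective (h.trans hg.map_zero.symm))

theorem symm : IsCollineation K g.symm where
  map_zero := by rw [Equiv.symm_apply_eq, hg.map_zero]
  mem_span_pair_iff {u v w} hu hv hw := by
    have symm_ne : ∀ {x : V}, x ≠ 0 → g.symm x ≠ 0 := fun {x} hx h =>
      hx (by rw [← g.apply_symm_apply x, h, hg.map_zero])
    simpa using (hg.mem_span_pair_iff (symm_ne hu) (symm_ne hv) (symm_ne hw)).symm

theorem map_mem_span_singleton {x v : V} (h : x ∈ K ∙ v) : g x ∈ K ∙ g v := by
  rcases eq_or_ne x 0 with rfl | hx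
  · simp [hg.map_zero]
  have hv : v ≠ 0 := by rintro rfl; simp_all
  simpa using (hg.mem_span_pair_iff hx hv hv).1 (by simpa using h)

theorem map_mem_span_pair {x u v : V} (h : x ∈ span K {u, v}) : g x ∈ span K {g u, g v} := by
  rcases eq_or_ne x 0 with rfl | hx
  · simp [hg.map_zero]
  rcases eq_or_ne u 0 with rfl | hu
  · rw [hg.map_zero, span_insert_zero]
    exact hg.map_mem_span_singleton (by rwa [span_insert_zero] at h)
  rcases eq_or_ne v 0 with rfl | hv
  · rw [hg.map_zero, Set.pair_comm, span_insert_zero]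
    exact hg.map_mem_span_singleton (by rwa [Set.pair_comm, span_insert_zero] at h)
  exact (hg.mem_span_pair_iff hx hu hv).1 h

theorem map_mem_span {x : V} {s : Set V} (h : x ∈ span K s) : g x ∈ span K (g '' s) := by
  classical
  obtain ⟨t, hts, hxt⟩ := mem_span_finite_of_mem_span h
  refine span_mono (Set.image_mono hts) ?_
  clear h hts
  induction t using Finset.induction_on generalizing x with
  | empty => simp_all [hg.map_zero]
  | insert a t _ ih =>
    rw [Finset.coe_insert, mem_span_insert] at hxt
    obtain ⟨c, z, hz, rfl⟩ := hxt
    have hmem : c • a + z ∈ span K {a, z} := mem_span_pair.2 ⟨c, 1, by rw [one_smul]⟩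
    rw [Finset.coe_insert, Set.image_insert_eq]
    refine span_le.2 (Set.pair_subset (subset_span (Set.mem_insert _ _)) ?_)
      (hg.map_mem_span_pair hmem)
    exact span_mono (Set.subset_insert _ _) (ih hz)

theorem map_mem_span_iff {x : V} {s : Set V} : g x ∈ span K (g '' s) ↔ x ∈ span K s :=
  ⟨fun h => by simpa [Equiv.symm_image_image] using hg.symm.map_mem_span h, hg.map_mem_span⟩

theorem linearIndependent_comp {v : ι → V} (hv : LinearIndependent K v) :
    LinearIndependent K (g ∘ v) := by
  rw [linearIndependent_iff_notMem_span] at hv ⊢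
  intro i
  rw [Set.image_comp, comp_apply, hg.map_mem_span_iff]
  exact hv i

theorem span_singleton_apply_eq {ψ : V →ₗ[K] V} {x : V} (hx : g x ∈ K ∙ ψ x) :
    K ∙ g x = K ∙ ψ x := by
  rcases eq_or_ne x 0 with rfl | hx0
  · simp [hg.map_zero]
  obtain ⟨t, ht⟩ := mem_span_singleton.1 hx
  have ht0 : t ≠ 0 := by rintro rfl; exact hg.map_ne_zero hx0 (by simp [← ht])
  rw [← ht, span_singleton_smul_eq (IsUnit.mk0 t ht0)]

theorem apply_smul_mem_span_singleton {ψ : V →ₗ[K] V} {x : V} (hx : g x ∈ K ∙ ψ x) (c : K) :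
    g (c • x) ∈ K ∙ ψ (c • x) := by
  rcases eq_or_ne c 0 with rfl | hc
  · simp [hg.map_zero]
  rw [map_smul, span_singleton_smul_eq (IsUnit.mk0 c hc)]
  exact (span_singleton_le_iff_mem _ _).2 hx
    (hg.map_mem_span_singleton (smul_mem _ _ (mem_span_singleton_self x)))

theorem apply_mem_span_singleton_of_inf_eq {ψ : V →ₗ[K] V} (hψ : Injective ψ)
    {x u v u' v' : V} (hu : g u ∈ K ∙ ψ u) (hv : g v ∈ K ∙ ψ v)
    (hu' : g u' ∈ K ∙ ψ u') (hv' : g v' ∈ K ∙ ψ v')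
    (h : span K {u, v} ⊓ span K {u', v'} = K ∙ x) : g x ∈ K ∙ ψ x := by
  have map_mem : ∀ {u v : V}, g u ∈ K ∙ ψ u → g v ∈ K ∙ ψ v → x ∈ span K {u, v} →
      g x ∈ (span K {u, v}).map ψ := by
    intro u v hu hv hx
    rw [map_span, Set.image_pair]
    refine span_le.2 (Set.pair_subset ?_ ?_) (hg.map_mem_span_pair hx)
    · exact span_mono (by simp) hu
    · exact span_mono (by simp) hv
  have hx := mem_inf.1 (h.ge (mem_span_singleton_self x))
  have := mem_inf.2 ⟨map_mem hu hv hx.1, map_mem hu' hv' hx.2⟩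
  rwa [← map_inf _ hψ, h, map_span, Set.image_singleton] at this

end IsCollineation

namespace IsCollineation

variable {g : Equiv.Perm V} (hg : IsCollineation K g)
include hg

theorem map_mem_span_singleton_iff {x v : V} : g x ∈ K ∙ g v ↔ x ∈ K ∙ v := by
  simpa using hg.map_mem_span_iff (s := {v})

theorem exists_unit_apply_add_mem_span_singleton {u v : V}
    (huv : LinearIndependent K ![u, v]) : ∃ c : Kˣ, g (u + v) ∈ K ∙ (g u + (c : K) • g v) := by
  obtain ⟨α, β, hαβ⟩ := mem_span_pair.1
    (hg.map_mem_span_pair (mem_span_pair.2 ⟨1, 1, by module⟩ : u + v ∈ span K {u, v}))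
  have add_notMem : ∀ {x y : V}, LinearIndependent K ![x, y] → x + y ∉ K ∙ y := by
    intro x y hxy hmem
    obtain ⟨t, ht⟩ := mem_span_singleton.1 hmem
    exact one_ne_zero (LinearIndependent.pair_iff.1 hxy 1 (1 - t)
      (by linear_combination (norm := module) -ht)).1
  have hα : α ≠ 0 := by
    rintro rfl
    exact add_notMem huv (hg.map_mem_span_singleton_iff.1
      (mem_span_singleton.2 ⟨β, by simpa using hαβ⟩))
  have hβ : β ≠ 0 := by
    rintro rfl
    refine add_notMem (LinearIndependent.pair_symm_iff.1 huv) ?_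
    rw [add_comm]
    exact hg.map_mem_span_singleton_iff.1 (mem_span_singleton.2 ⟨α, by simpa using hαβ⟩)
  refine ⟨Units.mk0 (β / α) (div_ne_zero hβ hα), mem_span_singleton.2 ⟨α, ?_⟩⟩
  rw [← hαβ, Units.val_mk0, smul_add, smul_smul, mul_div_cancel₀ _ hα]

theorem exists_linearIndependent_apply_mem_span_singleton (b : Module.Basis ι K V) (i₀ : ι) :
    ∃ f : ι → V, LinearIndependent K f ∧ (∀ i, g (b i) ∈ K ∙ f i) ∧
      ∀ j ≠ i₀, g (b i₀ + b j) ∈ K ∙ (f i₀ + f j) := by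
  classical
  have hpair : ∀ j ≠ i₀, LinearIndependent K ![b i₀, b j] := fun j hj =>
    LinearIndependent.pair_iff.2 ((LinearIndepOn.pair_iff b hj.symm).1 (b.linearIndepOn _))
  choose! c hc using fun j (hj : j ≠ i₀) =>
    hg.exists_unit_apply_add_mem_span_singleton (hpair j hj)
  let c' : ι → Kˣ := fun j => if j = i₀ then 1 else c j
  refine ⟨c' • (g ∘ b), (hg.linearIndependent_comp b.linearIndependent).units_smul c',
    fun i => ?_, fun j hj => ?_⟩
  · rw [Pi.smul_apply', span_singleton_group_smul_eq]
    exact mem_span_singleton_self _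
  · simpa [c', hj, Units.smul_def] using hc j hj

section Propagation

variable {b : Module.Basis ι K V} {i₀ : ι} {ψ : V →ₗ[K] V} (hψ : Injective ψ)
  (hψb : ∀ i, g (b i) ∈ K ∙ ψ (b i)) (hψb₀ : ∀ j ≠ i₀, g (b i₀ + b j) ∈ K ∙ ψ (b i₀ + b j))
include hψ hψb hψb₀

theorem apply_basis_sub_basis_mem_span_singleton {j k : ι} (hj : j ≠ i₀) (hk : k ≠ i₀)
    (hjk : j ≠ k) : g (b j - b k) ∈ K ∙ ψ (b j - b k) :=
  hg.apply_mem_span_singleton_of_inf_eq hψ (hψb j) (hψb k) (hψb₀ j hj) (hψb₀ k hk)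
    (b.linearIndependent.linearIndependent_triple hj.symm hk.symm hjk).inf_span_pair_eq_span_sub

theorem apply_add_smul_basis_add_basis_mem_span_singleton {j k : ι} (hj : j ≠ i₀)
    (hk : k ≠ i₀) (hjk : j ≠ k) {a : K} (ha : g (b i₀ + a • b j) ∈ K ∙ ψ (b i₀ + a • b j)) :
    g (b i₀ + a • b j + b k) ∈ K ∙ ψ (b i₀ + a • b j + b k) := by
  have h := (b.linearIndependent.linearIndependent_triple hj.symm hk.symm hjk
    ).inf_span_pair_eq_span_add_smul_add_smul a 1
  rw [one_smul] at h
  exact hg.apply_mem_span_singleton_of_inf_eq hψ ha (hψb k) (hψb₀ k hk) (hψb j) h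

theorem apply_add_natCast_smul_basis_mem_span_singleton (hι : ∀ i j : ι, ∃ k, k ≠ i ∧ k ≠ j)
    {j : ι} (hj : j ≠ i₀) (n : ℕ) :
    g (b i₀ + (n : K) • b j) ∈ K ∙ ψ (b i₀ + (n : K) • b j) := by
  induction n with
  | zero => simpa using hψb i₀
  | succ n ih =>
    obtain ⟨k, hk, hkj⟩ := hι i₀ j
    have hsum :=
      apply_add_smul_basis_add_basis_mem_span_singleton hg hψ hψb hψb₀ hj hk hkj.symm ih
    have hsub := apply_basis_sub_basis_mem_span_singleton hg hψ hψb hψb₀ hj hk hkj.symm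
    rw [Nat.cast_succ]
    exact hg.apply_mem_span_singleton_of_inf_eq hψ (hψb i₀) (hψb j) hsum hsub
      ((b.linearIndependent.linearIndependent_triple hj.symm hk.symm hkj.symm
        ).inf_span_pair_eq_span_add_add_one_smul _)

theorem apply_add_smul_basis_mem_span_singleton (hK : Surjective (Nat.cast : ℕ → K))
    (hι : ∀ i j : ι, ∃ k, k ≠ i ∧ k ≠ j) {j : ι} (hj : j ≠ i₀) (c : K) :
    g (b i₀ + c • b j) ∈ K ∙ ψ (b i₀ + c • b j) := by
  obtain ⟨n, rfl⟩ := hK c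
  exact apply_add_natCast_smul_basis_mem_span_singleton hg hψ hψb hψb₀ hι hj n

theorem apply_mem_span_singleton_of_mem_span_image (hK : Surjective (Nat.cast : ℕ → K))
    (hι : ∀ i j : ι, ∃ k, k ≠ i ∧ k ≠ j) {S : Finset ι} (hS : i₀ ∉ S) {y : V}
    (hy : y ∈ span K (b '' S)) : g y ∈ K ∙ ψ y ∧ g (b i₀ + y) ∈ K ∙ ψ (b i₀ + y) := by
  classical
  induction S using Finset.induction_on generalizing y with
  | empty =>
    obtain rfl : y = 0 := by simpa using hy
    simpa [hg.map_zero] using hψb i₀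
  | insert k T hkT ih =>
    obtain ⟨hk, hT⟩ : i₀ ≠ k ∧ i₀ ∉ T := by simpa using hS
    rw [Finset.coe_insert, Set.image_insert_eq, mem_span_insert] at hy
    obtain ⟨c, y', hy', rfl⟩ := hy
    obtain ⟨hgy', hgy'₀⟩ := ih hT hy'
    have hck := hg.apply_smul_mem_span_singleton (hψb k) c
    have hck₀ := apply_add_smul_basis_mem_span_singleton hg hψ hψb hψb₀ hK hι hk.symm c
    rcases eq_or_ne y' 0 with rfl | hy'0
    · simp only [add_zero]
      exact ⟨hck, hck₀⟩
    have huvw := b.linearIndependent.linearIndependent_triple_of_mem_span hk hT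
      (by exact_mod_cast hkT) hy' hy'0
    have hsum₀ : g (b i₀ + y' + c • b k) ∈ K ∙ ψ (b i₀ + y' + c • b k) := by
      have h := huvw.inf_span_pair_eq_span_add_smul_add_smul 1 c
      rw [one_smul] at h
      exact hg.apply_mem_span_singleton_of_inf_eq hψ hgy'₀ (hψb k) hck₀ hgy' h
    have hsum := hg.apply_mem_span_singleton_of_inf_eq hψ hgy' (hψb k) (hψb i₀) hsum₀
      (huvw.inf_span_pair_eq_span_add_smul c)
    rw [add_comm, ← add_assoc]
    exact ⟨hsum, hsum₀⟩

theorem apply_mem_span_singleton (hK : Surjective (Nat.cast : ℕ → K))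
    (hι : ∀ i j : ι, ∃ k, k ≠ i ∧ k ≠ j) (x : V) : g x ∈ K ∙ ψ x := by
  classical
  set S := (b.repr x).support.erase i₀
  have hx : x ∈ span K (b '' ↑(insert i₀ S)) :=
    span_mono (Set.image_mono (by exact_mod_cast Finset.insert_erase_subset _ _))
      (b.mem_span_repr_support x)
  have hS : i₀ ∉ S := Finset.notMem_erase _ _
  clear_value S
  rw [Finset.coe_insert, Set.image_insert_eq, mem_span_insert] at hx
  obtain ⟨a, y, hy, rfl⟩ := hx
  rcases eq_or_ne a 0 with rfl | ha
  · simpa using (apply_mem_span_singleton_of_mem_span_image hg hψ hψb hψb₀ hK hι hS hy).1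
  · have := hg.apply_smul_mem_span_singleton (apply_mem_span_singleton_of_mem_span_image
      hg hψ hψb hψb₀ hK hι hS (smul_mem _ (a⁻¹) hy)).2 a
    rwa [smul_add, smul_smul, mul_inv_cancel₀ ha, one_smul] at this

end Propagation

theorem exists_linearEquiv_span_singleton_eq (hK : Surjective (Nat.cast : ℕ → K))
    (b : Module.Basis ι K V) [Nonempty ι] (hι : ∀ i j : ι, ∃ k, k ≠ i ∧ k ≠ j) :
    ∃ φ : V ≃ₗ[K] V, ∀ x, K ∙ g x = K ∙ φ x := by
  obtain ⟨i₀⟩ := ‹Nonempty ι›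
  obtain ⟨f, hf, hbf, hbf₀⟩ := hg.exists_linearIndependent_apply_mem_span_singleton b i₀
  have hψb : ∀ i, b.constr K f (b i) = f i := b.constr_basis K f
  have hgψ : ∀ x, g x ∈ K ∙ b.constr K f x :=
    apply_mem_span_singleton hg (b.injective_constr_of_linearIndependent hf)
      (fun i => by rw [hψb]; exact hbf i) (i₀ := i₀)
      (fun j hj => by rw [map_add, hψb, hψb]; exact hbf₀ j hj) hK hι
  have hsurj : Surjective (b.constr K f) := fun z => by
    obtain ⟨t, ht⟩ := mem_span_singleton.1 (hgψ (g.symm z))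
    exact ⟨t • g.symm z, by rw [map_smul, ht, g.apply_symm_apply]⟩
  exact ⟨.ofBijective _ ⟨b.injective_constr_of_linearIndependent hf, hsurj⟩,
    fun x => hg.span_singleton_apply_eq (hgψ x)⟩

end IsCollineation

end

theorem stmt_15_general (p : ℕ) [Fact p.Prime]
    (V : Type*) [AddCommGroup V] [Module (ZMod p) V] [Infinite V]
    (G : Subgroup (Equiv.Perm V))
    (hAut : ∀ φ : V ≃ₗ[ZMod p] V, (φ.toEquiv : Equiv.Perm V) ∈ G)
    (hzero : ∀ g ∈ G, g 0 = (0 : V))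
    (h2 : ∀ g ∈ G, ∀ u v w : V, u ≠ 0 → v ≠ 0 → w ≠ 0 →
      (u ∈ Submodule.span (ZMod p) ({v, w} : Set V) ↔
        g u ∈ Submodule.span (ZMod p) ({g v, g w} : Set V))) :
    ∀ g ∈ G, ∃ h ∈ G, ∃ φ : V ≃ₗ[ZMod p] V,
      (∀ v : V, Submodule.span (ZMod p) {h v} = Submodule.span (ZMod p) {v}) ∧
      ∀ x : V, g x = h (φ x) := by
  classical
  intro g hg
  let b := Module.Basis.ofVectorSpace (ZMod p) V
  have : Infinite (Module.Basis.ofVectorSpaceIndex (ZMod p) V) := by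
    by_contra hfin
    rw [not_infinite_iff_finite] at hfin
    have := Module.Finite.of_basis b
    have := Module.finite_of_finite (ZMod p) (M := V)
    exact not_finite V
  obtain ⟨φ, hφ⟩ := IsCollineation.exists_linearEquiv_span_singleton_eq
    ⟨hzero g hg, h2 g hg _ _ _⟩ ZMod.natCast_zmod_surjective b
    fun i j => by simpa using Infinite.exists_notMem_finset {i, j}
  refine ⟨g * φ.symm.toEquiv, G.mul_mem hg (hAut φ.symm), φ, fun v => ?_, fun x => ?_⟩
  · simpa using hφ (φ.symm v)
  · simp

/-- If `G` preserves the relation of spanning the same line and preserves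
projective lines, then `G = G* Aut(V)`: every `g ∈ G` factors as an element of
`G` fixing all one-dimensional subspaces setwise composed with a linear
automorphism. -/
theorem stmt_15 (p : ℕ) [Fact p.Prime] (hp : p ≠ 2)
    (V : Type*) [AddCommGroup V] [Module (ZMod p) V] [Countable V] [Infinite V]
    (G : Subgroup (Equiv.Perm V))
    (hclosed : ∀ f : Equiv.Perm V, (∀ F : Finset V, ∃ g ∈ G, ∀ x ∈ F, g x = f x) → f ∈ G)
    (hAut : ∀ φ : V ≃ₗ[ZMod p] V, (φ.toEquiv : Equiv.Perm V) ∈ G)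
    (hzero : ∀ g ∈ G, g 0 = (0 : V))
    (h1 : ∀ g ∈ G, ∀ v w : V, v ≠ 0 → w ≠ 0 →
      Submodule.span (ZMod p) {v} = Submodule.span (ZMod p) {w} →
      Submodule.span (ZMod p) {g v} = Submodule.span (ZMod p) {g w})
    (h2 : ∀ g ∈ G, ∀ u v w : V, u ≠ 0 → v ≠ 0 → w ≠ 0 →
      (u ∈ Submodule.span (ZMod p) ({v, w} : Set V) ↔
        g u ∈ Submodule.span (ZMod p) ({g v, g w} : Set V))) :
    ∀ g ∈ G, ∃ h ∈ G, ∃ φ : V ≃ₗ[ZMod p] V,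
      (∀ v : V, Submodule.span (ZMod p) {h v} = Submodule.span (ZMod p) {v}) ∧
      ∀ x : V, g x = h (φ x) :=
  stmt_15_general p V G hAut hzero h2
end
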